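/- The set B₂ = ℝ \ A₂ is countable and nowhere dense in H(A₂), yet the space H(A₂) is not σ-compact. (Hence the implication 'H(A) σ-compact implies ℝ \ A countable and nowhere dense in H(A)' is not invertible.) -/

import Mathlib

open Set TopologicalSpace Topology

/-- The Hattori topology τ(A) on ℝ: generated by the Euclidean open sets together with
all sets [x, x+ε) with x ∈ ℝ \ A and ε > 0. -/
def hattori (A : Set ℝ) : TopologicalSpace ℝ :=
  TopologicalSpace.generateFrom
    ({s : Set ℝ | IsOpen s} ∪ {s : Set ℝ | ∃ x ∉ A, ∃ ε > 0, s = Set.Ico x (x + ε)})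

/-- `B₂`: the set of right endpoints of the closed intervals appearing in the standard
middle-thirds construction of the Cantor set. -/
def B2 : Set ℝ :=
  {x | ∃ n : ℕ, ∃ c : ℕ → ℝ, (∀ i, c i = 0 ∨ c i = 2) ∧
    x = (∑ i ∈ Finset.range n, c i / 3 ^ (i + 1)) + 1 / 3 ^ n}

/-- `A₂ = ℝ \ B₂`. -/
def A2 : Set ℝ := B2ᶜ

/-!
Every point of `B₂` is rational and `B₂` lies in the Cantor set, which is closed and totally
disconnected; since every nonempty open set of `H(A)` contains an interval `[x, x + ε)`, the Cantor
set is nowhere dense in `H(A)`, and so is `B₂`.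

A compact set of `H(A)` is compact in `ℝ`, and it cannot accumulate from the left at a point
`a ∉ A`, because `[a, a + 1)` is then a neighbourhood of `a`. If `H(A₂) = ⋃ Kₘ`, Baire's theorem in
the closure of `B₂` gives an open set `u` meeting `B₂` with `closure B₂ ∩ u ⊆ Kₘ`. But `B₂` is
generated from `1 = lim (1 - 2 / 3 ^ (k + 1))` by the increasing maps `x ↦ x / 3` and
`x ↦ (2 + x) / 3`, so each of its points is a limit from the left of points of `B₂`, and `Kₘ`
accumulates from the left at a point of `B₂ = ℝ \ A₂`.
-/

open Filter

section Hattori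

variable {A : Set ℝ}

theorem hattori_le : hattori A ≤ (inferInstance : TopologicalSpace ℝ) :=
  fun _ hs => isOpen_generateFrom_of_mem (Or.inl hs)

theorem isClosed_hattori {s : Set ℝ} (hs : IsClosed s) : IsClosed[hattori A] s :=
  (@isOpen_compl_iff ℝ s (hattori A)).1 (hattori_le _ hs.isOpen_compl)

theorem IsCompact.of_hattori {K : Set ℝ} (hK : @IsCompact ℝ (hattori A) K) : IsCompact K := by
  simpa using @IsCompact.image ℝ ℝ (hattori A) _ K id hK (continuous_id_of_le hattori_le)

theorem Ico_mem_nhds_hattori {a ε : ℝ} (ha : a ∉ A) (hε : 0 < ε) :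
    Ico a (a + ε) ∈ @nhds ℝ (hattori A) a :=
  @IsOpen.mem_nhds ℝ (hattori A) _ _ (isOpen_generateFrom_of_mem (Or.inr ⟨a, ha, ε, hε, rfl⟩))
    ⟨le_rfl, lt_add_of_pos_right a hε⟩

theorem nhdsGE_le_nhds_hattori (a : ℝ) : 𝓝[≥] a ≤ @nhds ℝ (hattori A) a := by
  rw [hattori, nhds_generateFrom]
  refine le_iInf₂ fun s ⟨has, hs⟩ => le_principal_iff.2 ?_
  rcases hs with hs | ⟨x, -, ε, -, rfl⟩
  · exact mem_nhdsWithin_of_mem_nhds (IsOpen.mem_nhds hs has)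
  · exact mem_nhdsWithin.2
      ⟨Iio (x + ε), isOpen_Iio, has.2, fun y ⟨hy, hya⟩ => ⟨has.1.trans hya, hy⟩⟩

theorem interior_hattori_eq_empty {s : Set ℝ} (hs : IsTotallyDisconnected s) :
    @interior ℝ (hattori A) s = ∅ := by
  refine eq_empty_iff_forall_notMem.2 fun a ha => ?_
  obtain ⟨b, hab, hsub⟩ := mem_nhdsGE_iff_exists_Ico_subset.1 <|
    nhdsGE_le_nhds_hattori a ((@interior_mem_nhds ℝ (hattori A) _ _).1 <|
      @IsOpen.mem_nhds ℝ (hattori A) _ _ (@isOpen_interior ℝ (hattori A) s) ha)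
  have hab : a < b := hab
  have := hs _ hsub isPreconnected_Ico (left_mem_Ico.2 hab)
    (show (a + b) / 2 ∈ Ico a b from ⟨by linarith, by linarith⟩)
  linarith

theorem not_isCompact_hattori_of_frequently_nhdsLT {K : Set ℝ} {a : ℝ} (ha : a ∉ A)
    (hK : ∃ᶠ x in 𝓝[<] a, x ∈ K) : ¬ @IsCompact ℝ (hattori A) K := by
  intro hc
  obtain ⟨x, -, hx⟩ := @hc (𝓝[<] a ⊓ 𝓟 K) (frequently_iff_neBot.1 hK) inf_le_right
  replace hx : (@nhds ℝ (hattori A) x ⊓ (𝓝[<] a ⊓ 𝓟 K)).NeBot := hx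
  have hle : @nhds ℝ (hattori A) x ⊓ (𝓝[<] a ⊓ 𝓟 K) ≤ 𝓝 x ⊓ 𝓝 a :=
    inf_le_inf (nhds_mono hattori_le) (inf_le_left.trans nhdsWithin_le_nhds)
  obtain rfl : x = a := by
    by_contra hne
    exact (hx.mono hle).ne (disjoint_iff.1 (disjoint_nhds_nhds.2 hne))
  refine hx.ne (empty_mem_iff_bot.1 ?_)
  exact mem_of_superset (inter_mem_inf (Ico_mem_nhds_hattori ha one_pos)
    (mem_inf_of_left self_mem_nhdsWithin)) fun y ⟨h1, h2⟩ => (not_lt.2 h1.1 h2).elim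

theorem IsClosed.isNowhereDense_hattori {s : Set ℝ} (hs : IsClosed s)
    (hs' : IsTotallyDisconnected s) : @IsNowhereDense ℝ (hattori A) s :=
  (@IsClosed.isNowhereDense_iff ℝ (hattori A) s (isClosed_hattori hs)).2
    (interior_hattori_eq_empty hs')

theorem not_sigmaCompactSpace_hattori {S : Set ℝ} (hne : S.Nonempty) (hSA : S ⊆ Aᶜ)
    (hS : ∀ a ∈ S, ∃ᶠ x in 𝓝[<] a, x ∈ S) : ¬ @SigmaCompactSpace ℝ (hattori A) := by
  intro h
  obtain ⟨K, hKc, hKU⟩ := @SigmaCompactSpace.isSigmaCompact_univ ℝ (hattori A) h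
  have : CompleteSpace (closure S) := isClosed_closure.completeSpace_coe
  have : Nonempty (closure S) := ⟨⟨hne.some, subset_closure hne.some_mem⟩⟩
  obtain ⟨m, x, hx⟩ := nonempty_interior_of_iUnion_of_closed
    (f := fun m => ((↑) : closure S → ℝ) ⁻¹' K m)
    (fun m => (hKc m).of_hattori.isClosed.preimage continuous_subtype_val)
    (by rw [← preimage_iUnion, hKU, preimage_univ])
  obtain ⟨u, hu, huK⟩ := (mem_nhds_subtype _ _ _).1 (mem_interior_iff_mem_nhds.1 hx)
  obtain ⟨a, hau, haS⟩ :=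
    mem_closure_iff.1 x.2 _ isOpen_interior (mem_interior_iff_mem_nhds.2 hu)
  refine not_isCompact_hattori_of_frequently_nhdsLT (hSA haS) ?_ (hKc m)
  refine ((hS a haS).and_eventually
    (nhdsWithin_le_nhds (mem_interior_iff_mem_nhds.1 hau))).mono fun y ⟨hyS, hyu⟩ => ?_
  exact huK (show (⟨y, subset_closure hyS⟩ : closure S) ∈ Subtype.val ⁻¹' u from hyu)

end Hattori

theorem sum_digits_div_three_pow_succ (d : ℕ → ℝ) (n : ℕ) :
    (∑ i ∈ Finset.range (n + 1), d i / 3 ^ (i + 1)) + 1 / 3 ^ (n + 1) =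
      (d 0 + ((∑ i ∈ Finset.range n, d (i + 1) / 3 ^ (i + 1)) + 1 / 3 ^ n)) / 3 := by
  have hshift : ∀ i ∈ Finset.range n,
      d (i + 1) / 3 ^ (i + 1 + 1) = d (i + 1) / 3 ^ (i + 1) / 3 :=
    fun _ _ => by rw [pow_succ, div_div]
  rw [Finset.sum_range_succ', Finset.sum_congr rfl hshift, ← Finset.sum_div]
  ring

theorem B2_step {c x : ℝ} (hc : c = 0 ∨ c = 2) (hx : x ∈ B2) : (c + x) / 3 ∈ B2 := by
  obtain ⟨n, d, hd, rfl⟩ := hx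
  refine ⟨n + 1, fun i => if i = 0 then c else d (i - 1), fun i => ?_, ?_⟩
  · dsimp only
    split_ifs
    exacts [hc, hd _]
  · rw [sum_digits_div_three_pow_succ]
    simp

theorem B2_induction {P : ℝ → Prop} (one : P 1)
    (step : ∀ c x, c = 0 ∨ c = 2 → P x → P ((c + x) / 3)) {x : ℝ} (hx : x ∈ B2) : P x := by
  obtain ⟨n, d, hd, rfl⟩ := hx
  induction n generalizing d with
  | zero => simpa using one
  | succ n ih =>
    rw [sum_digits_div_three_pow_succ]
    exact step _ _ (hd 0) (ih _ fun i => hd (i + 1))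

theorem one_mem_B2 : (1 : ℝ) ∈ B2 := ⟨0, 0, by simp, by simp⟩

theorem B2_countable : B2.Countable := by
  refine (countable_range ((↑) : ℚ → ℝ)).mono fun x hx => B2_induction ⟨1, by simp⟩ ?_ hx
  rintro c _ (rfl | rfl) ⟨q, rfl⟩
  exacts [⟨q / 3, by push_cast; ring⟩, ⟨(2 + q) / 3, by push_cast; ring⟩]

theorem one_mem_cantorSet : (1 : ℝ) ∈ cantorSet := by
  refine mem_iInter.2 fun n => ?_
  induction n with
  | zero => exact ⟨zero_le_one, le_rfl⟩
  | succ n ih => exact Or.inr ⟨1, ih, by norm_num⟩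

theorem B2_subset_cantorSet : B2 ⊆ cantorSet := by
  refine fun x hx => B2_induction one_mem_cantorSet ?_ hx
  rintro c y (rfl | rfl) hy <;> rw [cantorSet_eq_union_halves]
  exacts [Or.inl ⟨y, hy, by ring⟩, Or.inr ⟨y, hy, rfl⟩]

theorem isTotallyDisconnected_cantorSet : IsTotallyDisconnected cantorSet :=
  totallyDisconnectedSpace_subtype_iff.1 cantorSetHomeomorphNatToBool.symm.totallyDisconnectedSpace

theorem one_sub_two_div_three_pow_mem_B2 (k : ℕ) : 1 - 2 / 3 ^ (k + 1) ∈ B2 := by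
  induction k with
  | zero => convert B2_step (Or.inl rfl) one_mem_B2 using 1; norm_num
  | succ k ih => convert B2_step (Or.inr rfl) ih using 1; ring

theorem tendsto_add_div_three_nhdsLT (c y : ℝ) :
    Tendsto (fun x => (c + x) / 3) (𝓝[<] y) (𝓝[<] ((c + y) / 3)) :=
  tendsto_nhdsWithin_of_tendsto_nhds_of_eventually_within _
    (((continuous_const.add continuous_id).div_const 3).tendsto y |>.mono_left nhdsWithin_le_nhds)
    (eventually_nhdsWithin_of_forall fun x (hx : x < y) => by simp only [mem_Iio]; linarith)

theorem frequently_mem_B2_nhdsLT {b : ℝ} (hb : b ∈ B2) : ∃ᶠ x in 𝓝[<] b, x ∈ B2 := by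
  refine B2_induction ?_ (fun c y hc hy => (tendsto_add_div_three_nhdsLT c y).frequently_map _
    (fun _ => B2_step hc) hy) hb
  have hlim : Tendsto (fun k : ℕ => 1 - 2 / (3 : ℝ) ^ (k + 1)) atTop (𝓝[<] 1) := by
    refine tendsto_nhdsWithin_of_tendsto_nhds_of_eventually_within _ ?_
      (Eventually.of_forall fun k => by
        simp only [mem_Iio]
        linarith [show (0 : ℝ) < 2 / 3 ^ (k + 1) by positivity])
    simpa using tendsto_const_nhds.sub (tendsto_const_nhds.div_atTop
      ((tendsto_pow_atTop_atTop_of_one_lt (by norm_num : (1 : ℝ) < 3)).comp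
        (tendsto_add_atTop_nat 1)))
  exact hlim.frequently (Frequently.of_forall one_sub_two_div_three_pow_mem_B2)

/-- B₂ = ℝ \ A₂ is countable and nowhere dense in H(A₂), yet H(A₂) is not σ-compact. -/
theorem B2_countable_nowhereDense_but_not_sigmaCompact :
    B2.Countable ∧ @IsNowhereDense ℝ (hattori A2) B2 ∧
    ¬ @SigmaCompactSpace ℝ (hattori A2) := by
  refine ⟨B2_countable, ?_, ?_⟩
  · exact @IsNowhereDense.mono ℝ (hattori A2) _ _ B2_subset_cantorSet
      (isClosed_cantorSet.isNowhereDense_hattori isTotallyDisconnected_cantorSet)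
  · exact not_sigmaCompactSpace_hattori ⟨1, one_mem_B2⟩ (fun _ hx hA => hA hx)
      fun _ => frequently_mem_B2_nhdsLT
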